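/- Let f ∈ ℝ, d ∈ ℝ^p, and let H be a p×p real symmetric positive semidefinite matrix. For s > 0 define z(s) = f / √(1 + (π/8)·dᵀ·(s⁻¹·I + H)⁻¹·d). Then σ(|z(s)|) → σ(|f|) as s → 0⁺. (Limit σ₀² → 0 in Proposition 2.5: as the prior variance vanishes, the Bayesian confidence recovers the MAP confidence σ(|f_μ(x)|).) -/

import Mathlib

open Matrix Filter

/-! Since `(s⁻¹ • 1 + H)⁻¹ = s • (1 + s • H)⁻¹` and matrix inversion is continuous at `1`,
the posterior covariance tends to `0` as `s → 0`, so the quadratic form `dᵀ (s⁻¹ • 1 + H)⁻¹ d`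
vanishes in the limit and `z(s) → f`; continuity of `σ ∘ |·|` concludes. -/

/-- The logistic (sigmoid) function. -/
noncomputable def sigmoid (t : ℝ) : ℝ := 1 / (1 + Real.exp (-t))

theorem sigmoid_eq_real_sigmoid : sigmoid = Real.sigmoid := by
  ext t
  rw [sigmoid, Real.sigmoid_def, one_div]

namespace Matrix

variable {n 𝕜 : Type*} [Fintype n] [DecidableEq n]

theorem inv_smul_of_ne_zero [Field 𝕜] (A : Matrix n n 𝕜) {c : 𝕜} (hc : c ≠ 0) :
    (c • A)⁻¹ = c⁻¹ • A⁻¹ := by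
  by_cases hA : IsUnit A.det
  · exact inv_smul' (A := A) (Units.mk0 c hc) hA
  · have hcA : ¬IsUnit (c • A).det := by
      rwa [det_smul, IsUnit.mul_iff, not_and_or, or_iff_right (by simpa using pow_ne_zero _ hc)]
    rw [nonsing_inv_apply_not_isUnit _ hA, nonsing_inv_apply_not_isUnit _ hcA, smul_zero]

theorem inv_inv_smul_one_add [Field 𝕜] (H : Matrix n n 𝕜) {s : 𝕜} (hs : s ≠ 0) :
    (s⁻¹ • 1 + H)⁻¹ = s • (1 + s • H)⁻¹ := by
  have : s⁻¹ • 1 + H = s⁻¹ • (1 + s • H) := by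
    rw [smul_add, smul_smul, inv_mul_cancel₀ hs, one_smul]
  rw [this, inv_smul_of_ne_zero _ (inv_ne_zero hs), inv_inv]

theorem tendsto_inv_inv_smul_one_add_nhdsNE_zero [Field 𝕜] [TopologicalSpace 𝕜]
    [IsTopologicalDivisionRing 𝕜] (H : Matrix n n 𝕜) :
    Tendsto (fun s : 𝕜 => (s⁻¹ • 1 + H)⁻¹) (nhdsWithin 0 {0}ᶜ) (nhds 0) := by
  have hinv : ContinuousAt (fun s : 𝕜 => (1 + s • H)⁻¹) 0 := by
    refine ContinuousAt.comp (f := fun s : 𝕜 => 1 + s • H) ?_ (by fun_prop)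
    refine continuousAt_matrix_inv _ ?_
    simpa [Ring.inverse_eq_inv'] using continuousAt_inv₀ (one_ne_zero (α := 𝕜))
  have hlim : Tendsto (fun s : 𝕜 => s • (1 + s • H)⁻¹) (nhdsWithin 0 {0}ᶜ) (nhds 0) := by
    have hcont : ContinuousAt (fun s : 𝕜 => s • (1 + s • H)⁻¹) 0 := continuousAt_id.smul hinv
    simpa using hcont.tendsto.mono_left nhdsWithin_le_nhds
  refine hlim.congr' ?_
  filter_upwards [self_mem_nhdsWithin] with s hs
  exact (inv_inv_smul_one_add H hs).symm

end Matrix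

theorem tendsto_confidence_priorVar_zero_general {p : ℕ}
    (f : ℝ) (d : Fin p → ℝ)
    (H : Matrix (Fin p) (Fin p) ℝ) :
    Tendsto
      (fun s : ℝ =>
        sigmoid |f / Real.sqrt (1 + Real.pi / 8 *
          (d ⬝ᵥ ((s⁻¹ • (1 : Matrix (Fin p) (Fin p) ℝ) + H)⁻¹ *ᵥ d)))|)
      (nhdsWithin 0 (Set.Ioi 0)) (nhds (sigmoid |f|)) := by
  have hquad : Tendsto (fun s : ℝ => d ⬝ᵥ ((s⁻¹ • (1 : Matrix (Fin p) (Fin p) ℝ) + H)⁻¹ *ᵥ d))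
      (nhdsWithin 0 (Set.Ioi 0)) (nhds 0) := by
    have hform : Continuous fun M : Matrix (Fin p) (Fin p) ℝ => d ⬝ᵥ (M *ᵥ d) := by fun_prop
    have hcov := (tendsto_inv_inv_smul_one_add_nhdsNE_zero H).mono_left
      (nhdsWithin_mono 0 fun _ hs => (Set.mem_Ioi.mp hs).ne')
    simpa [Function.comp_def] using (hform.tendsto 0).comp hcov
  have hconf : ContinuousAt (fun q : ℝ => sigmoid |f / Real.sqrt (1 + Real.pi / 8 * q)|) 0 := by
    rw [sigmoid_eq_real_sigmoid]
    exact continuous_sigmoid.continuousAt.comp (continuous_abs.continuousAt.comp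
      (continuousAt_const.div (by fun_prop) (by simp)))
  simpa [Function.comp_def] using hconf.tendsto.comp hquad

/-- Limit `σ₀² → 0` in Proposition 2.5: as the prior variance vanishes, the
Bayesian confidence recovers the MAP confidence `σ(|f|)`. -/
theorem tendsto_confidence_priorVar_zero {p : ℕ}
    (f : ℝ) (d : Fin p → ℝ)
    (H : Matrix (Fin p) (Fin p) ℝ) (hH : H.PosSemidef) :
    Tendsto
      (fun s : ℝ =>
        sigmoid |f / Real.sqrt (1 + Real.pi / 8 *
          (d ⬝ᵥ ((s⁻¹ • (1 : Matrix (Fin p) (Fin p) ℝ) + H)⁻¹ *ᵥ d)))|)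
      (nhdsWithin 0 (Set.Ioi 0)) (nhds (sigmoid |f|)) :=
  tendsto_confidence_priorVar_zero_general f d H
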